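/- Let j ≥ 5 be a natural number and set q = 2^(j−3). Let R₃ = ℤ[v][a₁, a₂, b₁, b₂, c₁, c₂] and R₄ = ℤ[v][w₁, w₂, x₁, x₂, y₁, y₂, z₁, z₂], and define ℤ[v]-algebra homomorphisms d₀, d₁, d₂, d₃, d₄ : R₃ → R₄ as follows: d₀ sends (a₁, a₂, b₁, b₂, c₁, c₂) to (x₁, x₂, y₁, y₂, z₁, z₂); d₁ sends a₁ to w₁ + x₁ and a₂ to w₂ − w₁·x₁² + v·w₁·x₁ + x₂ and (b₁, b₂, c₁, c₂) to (y₁, y₂, z₁, z₂); d₂ sends (a₁, a₂) to (w₁, w₂), b₁ to x₁ + y₁, b₂ to x₂ − x₁·y₁² + v·x₁·y₁ + y₂, and (c₁, c₂) to (z₁, z₂); d₃ sends (a₁, a₂, b₁, b₂) to (w₁, w₂, x₁, x₂), c₁ to y₁ + z₁, and c₂ to y₂ − y₁·z₁² + v·y₁·z₁ + z₂; d₄ sends (a₁, a₂, b₁, b₂, c₁, c₂) to (w₁, w₂, x₁, x₂, y₁, y₂). Let E = T_j(w₁, x₁) · T_{j+1}(y₁, z₁) ∈ R₄ and let c ∈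 R₃ be the element c = a₁^{4q}·b₁^{12q}·c₁^{8q} + 7·a₂^{4q}·b₁^{4q}·c₁^{8q} + 2·a₂^{2q}·b₂^{2q}·c₂^{4q} + 2·a₁^{2q}·b₁^{4q}·c₂^{4q}·(a₂^{2q} + b₂^{2q}) + 2·(a₁^{4q}·b₁^{4q}·c₁^{4q} + a₁^{2q}·b₁^{2q}·c₁^{8q})·(a₂^{4q} + b₂^{4q} + c₂^{4q}) + 2·a₁^{6q}·b₁^{10q}·c₁^{8q} + 2·a₁^{8q}·b₁^{12q}·c₁^{4q} + 2·a₁^{12q}·b₁^{8q}·c₁^{4q} + 2·a₁^{2q}·b₂^{2q}·c₁^{16q} + 2·a₁^{4q}·b₂^{4q}·c₁^{8q}. Then the element E + d₀(c) − d₁(c) + d₂(c) − d₃(c) + d₄(c) lies in the ideal of R₄ generated by 4 and v⁴. -/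

import Mathlib

open MvPolynomial

/-- For `m ≥ 1`, the polynomial `T_m(u, w) = ∑_{i=1}^{2^m − 1} (C(2^m, i)/2)·u^i·w^(2^m − i)`,
interpreted in any commutative ring. (The binomial coefficient `C(2^m, i)` is even for
`0 < i < 2^m`, so natural-number division by `2` is exact.) -/
noncomputable def TPoly {R : Type*} [CommRing R] (m : ℕ) (u w : R) : R :=
  ∑ i ∈ Finset.Ico 1 (2 ^ m), ((Nat.choose (2 ^ m) i / 2 : ℕ) : R) * u ^ i * w ^ (2 ^ m - i)

/- We model `R₃ = ℤ[v][a₁, a₂, b₁, b₂, c₁, c₂]` as `MvPolynomial (Fin 7) ℤ`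
with `v = X 0`, `a₁ = X 1`, `a₂ = X 2`, `b₁ = X 3`, `b₂ = X 4`, `c₁ = X 5`, `c₂ = X 6`,
and `R₄ = ℤ[v][w₁, w₂, x₁, x₂, y₁, y₂, z₁, z₂]` as `MvPolynomial (Fin 9) ℤ`
with `v = X 0`, `w₁ = X 1`, `w₂ = X 2`, `x₁ = X 3`, `x₂ = X 4`, `y₁ = X 5`, `y₂ = X 6`,
`z₁ = X 7`, `z₂ = X 8`.  Each face map below fixes `v` and is determined by the images
of the listed variables, hence is the indicated `ℤ[v]`-algebra homomorphism. -/

/-- `d₀ : (a₁, a₂, b₁, b₂, c₁, c₂) ↦ (x₁, x₂, y₁, y₂, z₁, z₂)`. -/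
noncomputable def cobarD0 : MvPolynomial (Fin 7) ℤ →ₐ[ℤ] MvPolynomial (Fin 9) ℤ :=
  aeval ![X 0, X 3, X 4, X 5, X 6, X 7, X 8]

/-- `d₁ : a₁ ↦ w₁ + x₁`, `a₂ ↦ w₂ − w₁·x₁² + v·w₁·x₁ + x₂`,
`(b₁, b₂, c₁, c₂) ↦ (y₁, y₂, z₁, z₂)`. -/
noncomputable def cobarD1 : MvPolynomial (Fin 7) ℤ →ₐ[ℤ] MvPolynomial (Fin 9) ℤ :=
  aeval ![X 0, X 1 + X 3, X 2 - X 1 * (X 3) ^ 2 + X 0 * X 1 * X 3 + X 4, X 5, X 6, X 7, X 8]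

/-- `d₂ : (a₁, a₂) ↦ (w₁, w₂)`, `b₁ ↦ x₁ + y₁`, `b₂ ↦ x₂ − x₁·y₁² + v·x₁·y₁ + y₂`,
`(c₁, c₂) ↦ (z₁, z₂)`. -/
noncomputable def cobarD2 : MvPolynomial (Fin 7) ℤ →ₐ[ℤ] MvPolynomial (Fin 9) ℤ :=
  aeval ![X 0, X 1, X 2, X 3 + X 5, X 4 - X 3 * (X 5) ^ 2 + X 0 * X 3 * X 5 + X 6, X 7, X 8]

/-- `d₃ : (a₁, a₂, b₁, b₂) ↦ (w₁, w₂, x₁, x₂)`, `c₁ ↦ y₁ + z₁`,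
`c₂ ↦ y₂ − y₁·z₁² + v·y₁·z₁ + z₂`. -/
noncomputable def cobarD3 : MvPolynomial (Fin 7) ℤ →ₐ[ℤ] MvPolynomial (Fin 9) ℤ :=
  aeval ![X 0, X 1, X 2, X 3, X 4, X 5 + X 7, X 6 - X 5 * (X 7) ^ 2 + X 0 * X 5 * X 7 + X 8]

/-- `d₄ : (a₁, a₂, b₁, b₂, c₁, c₂) ↦ (w₁, w₂, x₁, x₂, y₁, y₂)`. -/
noncomputable def cobarD4 : MvPolynomial (Fin 7) ℤ →ₐ[ℤ] MvPolynomial (Fin 9) ℤ :=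
  aeval ![X 0, X 1, X 2, X 3, X 4, X 5, X 6]

lemma two_mul_TPoly {R : Type*} [CommRing R] (m : ℕ) (u w : R) :
    2 * TPoly m u w = (u + w) ^ (2 ^ m) - u ^ (2 ^ m) - w ^ (2 ^ m) := by
  have hN : 0 < 2 ^ m := Nat.pow_pos (by norm_num)
  have hs : ∀ i ∈ Finset.Ico 1 (2 ^ m),
      2 * (((Nat.choose (2 ^ m) i / 2 : ℕ) : R) * u ^ i * w ^ (2 ^ m - i))
        = u ^ i * w ^ (2 ^ m - i) * ((2 ^ m).choose i : ℕ) := by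
    intro i hi
    rw [Finset.mem_Ico] at hi
    have heven : 2 ∣ (2 ^ m).choose i := Nat.Prime.dvd_choose_pow Nat.prime_two
      (by omega) (by omega)
    have h2 : ((2 ^ m).choose i / 2 * 2 : ℕ) = (2 ^ m).choose i := Nat.div_mul_cancel heven
    calc 2 * (((Nat.choose (2 ^ m) i / 2 : ℕ) : R) * u ^ i * w ^ (2 ^ m - i))
        = (((Nat.choose (2 ^ m) i / 2 * 2 : ℕ) : R)) * u ^ i * w ^ (2 ^ m - i) := by
          push_cast; ring
      _ = u ^ i * w ^ (2 ^ m - i) * ((Nat.choose (2 ^ m) i : ℕ) : R) := by rw [h2]; ring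
  rw [TPoly, Finset.mul_sum, Finset.sum_congr rfl hs, add_pow, Finset.sum_range_succ,
    Finset.sum_range_eq_add_Ico _ hN]
  simp only [pow_zero, Nat.sub_zero, Nat.choose_zero_right, Nat.cast_one, one_mul, mul_one,
    Nat.sub_self, Nat.choose_self]
  ring

lemma map_TPoly {R S : Type*} [CommRing R] [CommRing S] (f : R →+* S) (m : ℕ) (u w : R) :
    f (TPoly m u w) = TPoly m (f u) (f w) := by
  simp [TPoly, map_sum, map_mul, map_pow, map_natCast]


lemma aeval_TPoly {R : Type*} [CommRing R] (g : Fin 2 → R) (m : ℕ)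
    (u w : MvPolynomial (Fin 2) ℤ) :
    aeval g (TPoly m u w) = TPoly m (aeval g u) (aeval g w) := by
  simp [TPoly, map_sum, map_mul, map_pow]

lemma TPoly_rec {R : Type*} [CommRing R] (m : ℕ) (u w : R) :
    TPoly (m + 1) u w = u ^ 2 ^ m * w ^ 2 ^ m
      + 2 * TPoly m u w * (u ^ 2 ^ m + w ^ 2 ^ m) + 2 * (TPoly m u w) ^ 2 := by
  have key : (TPoly (m + 1) (X 0) (X 1) : MvPolynomial (Fin 2) ℤ)
      = (X 0) ^ 2 ^ m * (X 1) ^ 2 ^ m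
        + 2 * TPoly m (X 0) (X 1) * ((X 0) ^ 2 ^ m + (X 1) ^ 2 ^ m)
        + 2 * (TPoly m (X 0) (X 1)) ^ 2 := by
    have h2 : (2 : MvPolynomial (Fin 2) ℤ) ≠ 0 := by
      intro h
      have := congrArg (MvPolynomial.eval (fun _ => (0 : ℤ))) h
      simp [map_ofNat] at this
    apply mul_left_cancel₀ h2
    have ha := two_mul_TPoly (m + 1) (X 0 : MvPolynomial (Fin 2) ℤ) (X 1)
    have hb := two_mul_TPoly m (X 0 : MvPolynomial (Fin 2) ℤ) (X 1)
    have hp : ((X 0 : MvPolynomial (Fin 2) ℤ) + X 1) ^ 2 ^ (m + 1)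
        = (((X 0 : MvPolynomial (Fin 2) ℤ) + X 1) ^ 2 ^ m) ^ 2 := by
      rw [← pow_mul, pow_succ]
    have hu : ((X 0 : MvPolynomial (Fin 2) ℤ)) ^ 2 ^ (m + 1)
        = (((X 0 : MvPolynomial (Fin 2) ℤ)) ^ 2 ^ m) ^ 2 := by rw [← pow_mul, pow_succ]
    have hw : ((X 1 : MvPolynomial (Fin 2) ℤ)) ^ 2 ^ (m + 1)
        = (((X 1 : MvPolynomial (Fin 2) ℤ)) ^ 2 ^ m) ^ 2 := by rw [← pow_mul, pow_succ]
    rw [hp, hu, hw] at ha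
    linear_combination ha - (2 * TPoly m (X 0 : MvPolynomial (Fin 2) ℤ) (X 1)
      + ((X 0 : MvPolynomial (Fin 2) ℤ) + X 1) ^ 2 ^ m
      + (X 0 : MvPolynomial (Fin 2) ℤ) ^ 2 ^ m + (X 1 : MvPolynomial (Fin 2) ℤ) ^ 2 ^ m) * hb
  have hring := congrArg (fun p : MvPolynomial (Fin 2) ℤ => (aeval ![u, w]) p) key
  simp only [map_add, map_mul, map_pow, map_ofNat, aeval_TPoly, aeval_X,
    Matrix.cons_val_zero, Matrix.cons_val_one, Matrix.head_cons] at hring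
  exact hring

section CharFour
variable {R : Type*} [CommRing R]

lemma two_mul_TPoly_succ (h4 : (4 : R) = 0) (m : ℕ) (u w : R) :
    2 * TPoly (m + 1) u w = 2 * (u ^ 2 ^ m * w ^ 2 ^ m) := by
  have h := TPoly_rec m u w
  linear_combination 2 * h + (TPoly m u w * (u ^ 2 ^ m + w ^ 2 ^ m) + (TPoly m u w) ^ 2) * h4

lemma add_pow_two_pow (h4 : (4 : R) = 0) (m : ℕ) (a b : R) :
    (a + b) ^ 2 ^ (m + 1) = a ^ 2 ^ (m + 1) + b ^ 2 ^ (m + 1)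
      + 2 * (a ^ 2 ^ m * b ^ 2 ^ m) := by
  have h1 := two_mul_TPoly (m + 1) a b
  have h2 := two_mul_TPoly_succ h4 m a b
  linear_combination h2 - h1

lemma TPoly_add_two (h4 : (4 : R) = 0) (m : ℕ) (u w : R) :
    TPoly (m + 2) u w = 3 * (u ^ 2 ^ m) ^ 2 * (w ^ 2 ^ m) ^ 2
      + 2 * (u ^ 2 ^ m) ^ 3 * (w ^ 2 ^ m) + 2 * (u ^ 2 ^ m) * (w ^ 2 ^ m) ^ 3 := by
  have h1 := TPoly_rec (m + 1) u w
  have h2 := two_mul_TPoly_succ h4 m u w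
  have hu : u ^ 2 ^ (m + 1) = (u ^ 2 ^ m) ^ 2 := by rw [← pow_mul, pow_succ]
  have hw : w ^ 2 ^ (m + 1) = (w ^ 2 ^ m) ^ 2 := by rw [← pow_mul, pow_succ]
  rw [hu, hw] at h1
  linear_combination h1 + ((u ^ 2 ^ m) ^ 2 + (w ^ 2 ^ m) ^ 2 + TPoly (m + 1) u w
    + u ^ 2 ^ m * w ^ 2 ^ m) * h2

end CharFour

noncomputable def cExpr {R : Type*} [CommRing R] (q : ℕ) (a₁ a₂ b₁ b₂ c₁ c₂ : R) : R :=
  a₁ ^ (4 * q) * b₁ ^ (12 * q) * c₁ ^ (8 * q)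
  + 7 * a₂ ^ (4 * q) * b₁ ^ (4 * q) * c₁ ^ (8 * q)
  + 2 * a₂ ^ (2 * q) * b₂ ^ (2 * q) * c₂ ^ (4 * q)
  + 2 * a₁ ^ (2 * q) * b₁ ^ (4 * q) * c₂ ^ (4 * q) * (a₂ ^ (2 * q) + b₂ ^ (2 * q))
  + 2 * (a₁ ^ (4 * q) * b₁ ^ (4 * q) * c₁ ^ (4 * q) + a₁ ^ (2 * q) * b₁ ^ (2 * q) * c₁ ^ (8 * q))
      * (a₂ ^ (4 * q) + b₂ ^ (4 * q) + c₂ ^ (4 * q))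
  + 2 * a₁ ^ (6 * q) * b₁ ^ (10 * q) * c₁ ^ (8 * q)
  + 2 * a₁ ^ (8 * q) * b₁ ^ (12 * q) * c₁ ^ (4 * q)
  + 2 * a₁ ^ (12 * q) * b₁ ^ (8 * q) * c₁ ^ (4 * q)
  + 2 * a₁ ^ (2 * q) * b₂ ^ (2 * q) * c₁ ^ (16 * q)
  + 2 * a₁ ^ (4 * q) * b₂ ^ (4 * q) * c₁ ^ (8 * q)

lemma map_cExpr {R S : Type*} [CommRing R] [CommRing S] (f : R →+* S) (q : ℕ)
    (a₁ a₂ b₁ b₂ c₁ c₂ : R) :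
    f (cExpr q a₁ a₂ b₁ b₂ c₁ c₂)
      = cExpr q (f a₁) (f a₂) (f b₁) (f b₂) (f c₁) (f c₂) := by
  simp [cExpr, map_add, map_mul, map_pow, map_ofNat]

set_option maxHeartbeats 2000000 in
lemma master {R : Type*} [CommRing R] (h4 : (4 : R) = 0) (n q : ℕ) (hq : q = 2 ^ (n + 2))
    (v w W x X y Y z Z : R) (hv : v ^ 4 = 0) :
    TPoly (n + 5) w x * TPoly (n + 5 + 1) y z
      + cExpr q x X y Y z Z
      - cExpr q (w + x) (W - w * x ^ 2 + v * w * x + X) y Y z Z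
      + cExpr q w W (x + y) (X - x * y ^ 2 + v * x * y + Y) z Z
      - cExpr q w W x X (y + z) (Y - y * z ^ 2 + v * y * z + Z)
      + cExpr q w W x X y Y = 0 := by
  have hq4 : 4 ≤ q := by
    rw [hq]
    calc (4 : ℕ) = 2 ^ 2 := rfl
    _ ≤ 2 ^ (n + 2) := Nat.pow_le_pow_right (by norm_num) (by omega)
  have hvq : v ^ q = 0 := by
    rw [show q = 4 + (q - 4) by omega, pow_add, hv, zero_mul]
  have hqe : Even q := ⟨2 ^ (n + 1), by rw [hq, pow_succ]; ring⟩
  -- power-of-two expansion instances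
  have p2 : ∀ a b : R, (a + b) ^ (2 * q) = ((a ^ q) ^ 2 + 2 * (a ^ q) * (b ^ q) + (b ^ q) ^ 2) := by
    intro a b
    have h := add_pow_two_pow h4 (n + 2) a b
    rw [← hq] at h
    rw [show (2 : ℕ) ^ (n + 2 + 1) = 2 * q from by rw [hq]; ring] at h
    linear_combination h
  have p4 : ∀ a b : R, (a + b) ^ (4 * q) = ((a ^ q) ^ 4 + 2 * (a ^ q) ^ 2 * (b ^ q) ^ 2 + (b ^ q) ^ 4) := by
    intro a b
    have h := add_pow_two_pow h4 (n + 3) a b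
    rw [show (2 : ℕ) ^ (n + 3) = 2 * q from by rw [hq]; ring] at h
    rw [show (2 : ℕ) ^ (n + 3 + 1) = 4 * q from by rw [hq]; ring] at h
    linear_combination h
  have p8 : ∀ a b : R, (a + b) ^ (8 * q) = ((a ^ q) ^ 8 + 2 * (a ^ q) ^ 4 * (b ^ q) ^ 4 + (b ^ q) ^ 8) := by
    intro a b
    have h := add_pow_two_pow h4 (n + 4) a b
    rw [show (2 : ℕ) ^ (n + 4) = 4 * q from by rw [hq]; ring] at h
    rw [show (2 : ℕ) ^ (n + 4 + 1) = 8 * q from by rw [hq]; ring] at h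
    linear_combination h
  have p16 : ∀ a b : R, (a + b) ^ (16 * q) = ((a ^ q) ^ 16 + 2 * (a ^ q) ^ 8 * (b ^ q) ^ 8 + (b ^ q) ^ 16) := by
    intro a b
    have h := add_pow_two_pow h4 (n + 5) a b
    rw [show (2 : ℕ) ^ (n + 5) = 8 * q from by rw [hq]; ring] at h
    rw [show (2 : ℕ) ^ (n + 5 + 1) = 16 * q from by rw [hq]; ring] at h
    linear_combination h
  have tq : ∀ a b : R, 2 * (a + b) ^ q = 2 * a ^ q + 2 * b ^ q := by
    intro a b
    have h := add_pow_two_pow h4 (n + 1) a b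
    rw [show (2 : ℕ) ^ (n + 1 + 1) = q from by rw [hq]] at h
    linear_combination 2 * h + (a ^ 2 ^ (n + 1) * b ^ 2 ^ (n + 1)) * h4
  have e6 : ∀ a b : R, (a + b) ^ (6 * q) = ((a ^ q) ^ 6 + 2 * (a ^ q) ^ 5 * (b ^ q) + 3 * (a ^ q) ^ 4 * (b ^ q) ^ 2 + 3 * (a ^ q) ^ 2 * (b ^ q) ^ 4 + 2 * (a ^ q) * (b ^ q) ^ 5 + (b ^ q) ^ 6) := by
    intro a b
    rw [show 6 * q = 4 * q + 2 * q from by ring, pow_add, p4, p2]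
    linear_combination ((a ^ q) ^ 3 * (b ^ q) ^ 3) * h4
  have e10 : ∀ a b : R, (a + b) ^ (10 * q) = ((a ^ q) ^ 10 + 2 * (a ^ q) ^ 9 * (b ^ q) + (a ^ q) ^ 8 * (b ^ q) ^ 2 + 2 * (a ^ q) ^ 6 * (b ^ q) ^ 4 + 2 * (a ^ q) ^ 4 * (b ^ q) ^ 6 + (a ^ q) ^ 2 * (b ^ q) ^ 8 + 2 * (a ^ q) * (b ^ q) ^ 9 + (b ^ q) ^ 10) := by
    intro a b
    rw [show 10 * q = 8 * q + 2 * q from by ring, pow_add, p8, p2]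
    linear_combination ((a ^ q) ^ 5 * (b ^ q) ^ 5) * h4
  have e12 : ∀ a b : R, (a + b) ^ (12 * q) = ((a ^ q) ^ 12 + 2 * (a ^ q) ^ 10 * (b ^ q) ^ 2 + 3 * (a ^ q) ^ 8 * (b ^ q) ^ 4 + 3 * (a ^ q) ^ 4 * (b ^ q) ^ 8 + 2 * (a ^ q) ^ 2 * (b ^ q) ^ 10 + (b ^ q) ^ 12) := by
    intro a b
    rw [show 12 * q = 8 * q + 4 * q from by ring, pow_add, p8, p4]
    linear_combination ((a ^ q) ^ 6 * (b ^ q) ^ 6) * h4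
  have gen2 : ∀ P Q u t : R, (P - u * t ^ 2 + v * u * t + Q) ^ (2 * q) = ((P ^ q) ^ 2 + 2 * (P ^ q) * (Q ^ q) + 2 * (P ^ q) * (u ^ q) * (t ^ q) ^ 2 + (Q ^ q) ^ 2 + 2 * (Q ^ q) * (u ^ q) * (t ^ q) ^ 2 + (u ^ q) ^ 2 * (t ^ q) ^ 4) := by
    intro P Q u t
    have hm : (v * (u * t)) ^ q = 0 := by rw [mul_pow, hvq, zero_mul]
    have F1 : (P - u * t ^ 2 + v * u * t + Q) ^ (2 * q)
        = ((P + (Q - u * t ^ 2)) ^ q) ^ 2 := by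
      rw [show P - u * t ^ 2 + v * u * t + Q = (P + (Q - u * t ^ 2)) + v * (u * t) from by
        ring, p2, hm]
      ring
    have F2 := p2 P (Q - u * t ^ 2)
    have F3 := p2 Q (-(u * t ^ 2))
    have F4 : (-(u * t ^ 2)) ^ q = u ^ q * (t ^ q) ^ 2 := by
      rw [hqe.neg_pow, mul_pow, pow_right_comm]
    have F5 := tq Q (-(u * t ^ 2))
    linear_combination F1 + F2 + F3
      + ((-(u * t ^ 2)) ^ q + u ^ q * (t ^ q) ^ 2 + 2 * (Q ^ q) + 2 * (P ^ q)) * F4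
      + (P ^ q) * F5
  have gen4 : ∀ P Q u t : R, (P - u * t ^ 2 + v * u * t + Q) ^ (4 * q) = ((P ^ q) ^ 4 + 2 * (P ^ q) ^ 2 * (Q ^ q) ^ 2 + 2 * (P ^ q) ^ 2 * (u ^ q) ^ 2 * (t ^ q) ^ 4 + (Q ^ q) ^ 4 + 2 * (Q ^ q) ^ 2 * (u ^ q) ^ 2 * (t ^ q) ^ 4 + (u ^ q) ^ 4 * (t ^ q) ^ 8) := by
    intro P Q u t
    have hm : (v * (u * t)) ^ q = 0 := by rw [mul_pow, hvq, zero_mul]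
    have F1 : (P - u * t ^ 2 + v * u * t + Q) ^ (4 * q)
        = ((P + (Q - u * t ^ 2)) ^ q) ^ 4 := by
      rw [show P - u * t ^ 2 + v * u * t + Q = (P + (Q - u * t ^ 2)) + v * (u * t) from by
        ring, p4, hm]
      ring
    have F2 := p4 P (Q - u * t ^ 2)
    have F3' := p4 Q (-(u * t ^ 2))
    have F3 := p2 Q (-(u * t ^ 2))
    have F4 : (-(u * t ^ 2)) ^ q = u ^ q * (t ^ q) ^ 2 := by
      rw [hqe.neg_pow, mul_pow, pow_right_comm]
    linear_combination F1 + F2 + F3' + 2 * (P ^ q) ^ 2 * F3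
      + (((-(u * t ^ 2)) ^ q) ^ 3 + ((-(u * t ^ 2)) ^ q) ^ 2 * (u ^ q * (t ^ q) ^ 2)
        + ((-(u * t ^ 2)) ^ q) * (u ^ q * (t ^ q) ^ 2) ^ 2 + (u ^ q * (t ^ q) ^ 2) ^ 3
        + 2 * (Q ^ q) ^ 2 * (((-(u * t ^ 2)) ^ q) + u ^ q * (t ^ q) ^ 2)
        + 2 * (P ^ q) ^ 2 * (((-(u * t ^ 2)) ^ q) + u ^ q * (t ^ q) ^ 2)) * F4
      + ((P ^ q) ^ 2 * (Q ^ q) * ((-(u * t ^ 2)) ^ q)) * h4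
  have hT1 : TPoly (n + 5) w x = 3 * (w ^ q) ^ 4 * (x ^ q) ^ 4
      + 2 * (w ^ q) ^ 6 * (x ^ q) ^ 2 + 2 * (w ^ q) ^ 2 * (x ^ q) ^ 6 := by
    have h := TPoly_add_two h4 (n + 3) w x
    rw [show (2 : ℕ) ^ (n + 3) = 2 * q from by rw [hq]; ring] at h
    rw [show n + 3 + 2 = n + 5 from by omega] at h
    rw [h]
    ring
  have hT2 : TPoly (n + 5 + 1) y z = 3 * (y ^ q) ^ 8 * (z ^ q) ^ 8
      + 2 * (y ^ q) ^ 12 * (z ^ q) ^ 4 + 2 * (y ^ q) ^ 4 * (z ^ q) ^ 12 := by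
    have h := TPoly_add_two h4 (n + 4) y z
    rw [show (2 : ℕ) ^ (n + 4) = 4 * q from by rw [hq]; ring] at h
    rw [show n + 4 + 2 = n + 5 + 1 from by omega] at h
    rw [h]
    ring
  have qpow : ∀ (r : R) (k : ℕ), r ^ (k * q) = (r ^ q) ^ k := by
    intro r k
    rw [mul_comm, pow_mul]
  simp only [cExpr]
  rw [hT1, hT2, gen4 W X w x, gen2 W X w x, gen4 X Y x y, gen2 X Y x y, gen4 Y Z y z,
    p2 w x, p4 w x, e6 w x, p8 w x, e12 w x,
    p2 x y, p4 x y, p8 x y, e10 x y, e12 x y,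
    p4 y z, p8 y z, p16 y z]
  simp only [qpow]
  linear_combination (((-1) * (W ^ q) * (X ^ q) * (Y ^ q) ^ 2 * (Z ^ q) ^ 4 +
      (-1) * (W ^ q) * (x ^ q) ^ 2 * (X ^ q) * (y ^ q) ^ 4 * (Z ^ q) ^ 4 +
      1 * (W ^ q) ^ 2 * (X ^ q) * (Y ^ q) * (Z ^ q) ^ 4 +
      (-1) * (W ^ q) ^ 2 * (X ^ q) ^ 2 * (Y ^ q) ^ 2 * (Z ^ q) ^ 2 +
      (-1) * (W ^ q) ^ 2 * (X ^ q) ^ 2 * (y ^ q) ^ 2 * (z ^ q) ^ 4 * (Z ^ q) ^ 2 +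
      (-1) * (W ^ q) ^ 2 * (X ^ q) ^ 2 * (y ^ q) ^ 2 * (Y ^ q) ^ 2 * (z ^ q) ^ 4 +
      (-4) * (W ^ q) ^ 2 * (X ^ q) ^ 2 * (y ^ q) ^ 4 * (z ^ q) ^ 8 +
      1 * (W ^ q) ^ 2 * (x ^ q) * (y ^ q) ^ 2 * (Y ^ q) * (Z ^ q) ^ 4 +
      1 * (W ^ q) ^ 2 * (x ^ q) * (X ^ q) * (y ^ q) ^ 2 * (Z ^ q) ^ 4 +
      (-1) * (W ^ q) ^ 2 * (x ^ q) ^ 2 * (X ^ q) ^ 2 * (y ^ q) ^ 2 * (z ^ q) ^ 8 +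
      (-1) * (W ^ q) ^ 2 * (x ^ q) ^ 4 * (X ^ q) ^ 2 * (y ^ q) ^ 4 * (z ^ q) ^ 4 +
      3 * (W ^ q) ^ 4 * (x ^ q) ^ 2 * (y ^ q) ^ 2 * (z ^ q) ^ 8 +
      (-4) * (W ^ q) ^ 4 * (x ^ q) ^ 4 * (y ^ q) ^ 4 * (z ^ q) ^ 4 +
      (-1) * (w ^ q) * (x ^ q) * (Y ^ q) ^ 2 * (z ^ q) ^ 16 +
      (-1) * (w ^ q) * (x ^ q) * (y ^ q) ^ 2 * (z ^ q) ^ 8 * (Z ^ q) ^ 4 +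
      (-1) * (w ^ q) * (x ^ q) * (y ^ q) ^ 2 * (Y ^ q) ^ 4 * (z ^ q) ^ 8 +
      (-1) * (w ^ q) * (x ^ q) * (y ^ q) ^ 4 * (Y ^ q) ^ 2 * (Z ^ q) ^ 4 +
      (-1) * (w ^ q) * (x ^ q) * (X ^ q) ^ 2 * (y ^ q) ^ 4 * (Z ^ q) ^ 4 +
      (-1) * (w ^ q) * (x ^ q) * (X ^ q) ^ 4 * (y ^ q) ^ 2 * (z ^ q) ^ 8 +
      (-1) * (w ^ q) * (x ^ q) ^ 2 * (X ^ q) * (Y ^ q) ^ 2 * (Z ^ q) ^ 4 +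
      (-1) * (w ^ q) * (x ^ q) ^ 4 * (X ^ q) * (y ^ q) ^ 4 * (Z ^ q) ^ 4 +
      (-1) * (w ^ q) * (x ^ q) ^ 5 * (y ^ q) ^ 10 * (z ^ q) ^ 8 +
      (-2) * (w ^ q) * (W ^ q) * (x ^ q) * (X ^ q) * (y ^ q) ^ 4 * (Z ^ q) ^ 4 +
      (-1) * (w ^ q) * (W ^ q) * (x ^ q) ^ 2 * (Y ^ q) ^ 2 * (Z ^ q) ^ 4 +
      (-1) * (w ^ q) * (W ^ q) * (x ^ q) ^ 4 * (y ^ q) ^ 4 * (Z ^ q) ^ 4 +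
      (-1) * (w ^ q) * (W ^ q) ^ 2 * (x ^ q) * (y ^ q) ^ 4 * (Z ^ q) ^ 4 +
      (-2) * (w ^ q) * (W ^ q) ^ 2 * (x ^ q) * (X ^ q) ^ 2 * (y ^ q) ^ 2 * (z ^ q) ^ 8 +
      (-1) * (w ^ q) * (W ^ q) ^ 4 * (x ^ q) * (y ^ q) ^ 2 * (z ^ q) ^ 8 +
      1 * (w ^ q) ^ 2 * (X ^ q) * (Y ^ q) * (z ^ q) ^ 16 +
      1 * (w ^ q) ^ 2 * (X ^ q) * (y ^ q) ^ 4 * (Y ^ q) * (Z ^ q) ^ 4 +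
      1 * (w ^ q) ^ 2 * (X ^ q) ^ 2 * (y ^ q) ^ 2 * (Y ^ q) ^ 2 * (z ^ q) ^ 8 +
      (-1) * (w ^ q) ^ 2 * (X ^ q) ^ 2 * (y ^ q) ^ 8 * (z ^ q) ^ 8 +
      1 * (w ^ q) ^ 2 * (x ^ q) * (y ^ q) * (z ^ q) ^ 8 * (Z ^ q) ^ 4 +
      1 * (w ^ q) ^ 2 * (x ^ q) * (y ^ q) * (Y ^ q) ^ 4 * (z ^ q) ^ 8 +
      1 * (w ^ q) ^ 2 * (x ^ q) * (y ^ q) ^ 2 * (Y ^ q) * (z ^ q) ^ 16 +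
      1 * (w ^ q) ^ 2 * (x ^ q) * (y ^ q) ^ 6 * (Y ^ q) * (Z ^ q) ^ 4 +
      1 * (w ^ q) ^ 2 * (x ^ q) * (X ^ q) * (y ^ q) ^ 2 * (z ^ q) ^ 16 +
      1 * (w ^ q) ^ 2 * (x ^ q) * (X ^ q) * (y ^ q) ^ 6 * (Z ^ q) ^ 4 +
      2 * (w ^ q) ^ 2 * (x ^ q) * (X ^ q) ^ 2 * (y ^ q) * (Y ^ q) ^ 2 * (z ^ q) ^ 8 +
      1 * (w ^ q) ^ 2 * (x ^ q) * (X ^ q) ^ 4 * (y ^ q) * (z ^ q) ^ 8 +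
      (-1) * (w ^ q) ^ 2 * (x ^ q) ^ 2 * (Y ^ q) ^ 2 * (z ^ q) ^ 8 * (Z ^ q) ^ 2 +
      (-1) * (w ^ q) ^ 2 * (x ^ q) ^ 2 * (Y ^ q) ^ 4 * (z ^ q) ^ 8 +
      (-1) * (w ^ q) ^ 2 * (x ^ q) ^ 2 * (y ^ q) ^ 2 * (z ^ q) ^ 12 * (Z ^ q) ^ 2 +
      1 * (w ^ q) ^ 2 * (x ^ q) ^ 2 * (y ^ q) ^ 2 * (Y ^ q) ^ 2 * (Z ^ q) ^ 4 +
      (-1) * (w ^ q) ^ 2 * (x ^ q) ^ 2 * (y ^ q) ^ 2 * (Y ^ q) ^ 2 * (z ^ q) ^ 12 +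
      (-2) * (w ^ q) ^ 2 * (x ^ q) ^ 2 * (y ^ q) ^ 4 * (z ^ q) ^ 4 * (Z ^ q) ^ 4 +
      (-2) * (w ^ q) ^ 2 * (x ^ q) ^ 2 * (y ^ q) ^ 4 * (Y ^ q) ^ 2 * (z ^ q) ^ 4 * (Z ^ q) ^ 2 +
      (-2) * (w ^ q) ^ 2 * (x ^ q) ^ 2 * (y ^ q) ^ 4 * (Y ^ q) ^ 4 * (z ^ q) ^ 4 +
      (-2) * (w ^ q) ^ 2 * (x ^ q) ^ 2 * (y ^ q) ^ 6 * (z ^ q) ^ 8 * (Z ^ q) ^ 2 +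
      (-1) * (w ^ q) ^ 2 * (x ^ q) ^ 2 * (y ^ q) ^ 6 * (Y ^ q) ^ 2 * (z ^ q) ^ 8 +
      (-1) * (w ^ q) ^ 2 * (x ^ q) ^ 2 * (y ^ q) ^ 8 * (z ^ q) ^ 12 +
      (-1) * (w ^ q) ^ 2 * (x ^ q) ^ 2 * (y ^ q) ^ 8 * (Y ^ q) ^ 2 * (Z ^ q) ^ 2 +
      (-1) * (w ^ q) ^ 2 * (x ^ q) ^ 2 * (y ^ q) ^ 10 * (z ^ q) ^ 4 * (Z ^ q) ^ 2 +
      (-1) * (w ^ q) ^ 2 * (x ^ q) ^ 2 * (y ^ q) ^ 10 * (Y ^ q) ^ 2 * (z ^ q) ^ 4 +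
      (-1) * (w ^ q) ^ 2 * (x ^ q) ^ 2 * (y ^ q) ^ 12 * (z ^ q) ^ 8 +
      2 * (w ^ q) ^ 2 * (x ^ q) ^ 2 * (X ^ q) * (y ^ q) ^ 2 * (Y ^ q) * (Z ^ q) ^ 4 +
      1 * (w ^ q) ^ 2 * (x ^ q) ^ 2 * (X ^ q) ^ 2 * (Y ^ q) ^ 2 * (z ^ q) ^ 8 +
      1 * (w ^ q) ^ 2 * (x ^ q) ^ 2 * (X ^ q) ^ 2 * (y ^ q) ^ 2 * (Z ^ q) ^ 4 +
      1 * (w ^ q) ^ 2 * (x ^ q) ^ 2 * (X ^ q) ^ 2 * (y ^ q) ^ 6 * (z ^ q) ^ 8 +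
      (-2) * (w ^ q) ^ 2 * (x ^ q) ^ 2 * (X ^ q) ^ 4 * (y ^ q) ^ 4 * (z ^ q) ^ 4 +
      2 * (w ^ q) ^ 2 * (x ^ q) ^ 3 * (y ^ q) ^ 4 * (Y ^ q) * (Z ^ q) ^ 4 +
      2 * (w ^ q) ^ 2 * (x ^ q) ^ 3 * (y ^ q) ^ 5 * (Y ^ q) ^ 2 * (z ^ q) ^ 8 +
      2 * (w ^ q) ^ 2 * (x ^ q) ^ 3 * (X ^ q) ^ 2 * (y ^ q) ^ 5 * (z ^ q) ^ 8 +
      1 * (w ^ q) ^ 2 * (x ^ q) ^ 4 * (y ^ q) ^ 4 * (Y ^ q) ^ 2 * (z ^ q) ^ 8 +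
      1 * (w ^ q) ^ 2 * (x ^ q) ^ 4 * (y ^ q) ^ 6 * (Z ^ q) ^ 4 +
      (-1) * (w ^ q) ^ 2 * (x ^ q) ^ 4 * (y ^ q) ^ 10 * (z ^ q) ^ 8 +
      1 * (w ^ q) ^ 2 * (x ^ q) ^ 4 * (X ^ q) * (Y ^ q) * (Z ^ q) ^ 4 +
      (-1) * (w ^ q) ^ 2 * (x ^ q) ^ 4 * (X ^ q) ^ 2 * (Y ^ q) ^ 2 * (Z ^ q) ^ 2 +
      (-1) * (w ^ q) ^ 2 * (x ^ q) ^ 4 * (X ^ q) ^ 2 * (y ^ q) ^ 2 * (z ^ q) ^ 4 * (Z ^ q) ^ 2 +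
      (-1) * (w ^ q) ^ 2 * (x ^ q) ^ 4 * (X ^ q) ^ 2 * (y ^ q) ^ 2 * (Y ^ q) ^ 2 * (z ^ q) ^ 4 +
      (-3) * (w ^ q) ^ 2 * (x ^ q) ^ 4 * (X ^ q) ^ 2 * (y ^ q) ^ 4 * (z ^ q) ^ 8 +
      1 * (w ^ q) ^ 2 * (x ^ q) ^ 5 * (y ^ q) ^ 2 * (Y ^ q) * (Z ^ q) ^ 4 +
      1 * (w ^ q) ^ 2 * (x ^ q) ^ 5 * (y ^ q) ^ 9 * (z ^ q) ^ 8 +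
      1 * (w ^ q) ^ 2 * (x ^ q) ^ 5 * (X ^ q) * (y ^ q) ^ 2 * (Z ^ q) ^ 4 +
      1 * (w ^ q) ^ 2 * (x ^ q) ^ 6 * (y ^ q) ^ 4 * (z ^ q) ^ 12 +
      2 * (w ^ q) ^ 2 * (x ^ q) ^ 6 * (y ^ q) ^ 8 * (z ^ q) ^ 8 +
      1 * (w ^ q) ^ 2 * (x ^ q) ^ 6 * (y ^ q) ^ 12 * (z ^ q) ^ 4 +
      (-1) * (w ^ q) ^ 2 * (x ^ q) ^ 6 * (X ^ q) ^ 2 * (y ^ q) ^ 2 * (z ^ q) ^ 8 +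
      (-1) * (w ^ q) ^ 2 * (x ^ q) ^ 8 * (X ^ q) ^ 2 * (y ^ q) ^ 4 * (z ^ q) ^ 4 +
      (-1) * (w ^ q) ^ 2 * (x ^ q) ^ 10 * (y ^ q) ^ 8 * (z ^ q) ^ 4 +
      (-1) * (w ^ q) ^ 2 * (W ^ q) * (X ^ q) * (y ^ q) ^ 4 * (Z ^ q) ^ 4 +
      (-2) * (w ^ q) ^ 2 * (W ^ q) * (x ^ q) ^ 3 * (y ^ q) ^ 4 * (Z ^ q) ^ 4 +
      (-1) * (w ^ q) ^ 2 * (W ^ q) ^ 2 * (X ^ q) ^ 2 * (y ^ q) ^ 2 * (z ^ q) ^ 8 +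
      1 * (w ^ q) ^ 2 * (W ^ q) ^ 2 * (x ^ q) ^ 2 * (y ^ q) ^ 2 * (Z ^ q) ^ 4 +
      (-2) * (w ^ q) ^ 2 * (W ^ q) ^ 2 * (x ^ q) ^ 2 * (X ^ q) ^ 2 * (y ^ q) ^ 4 * (z ^ q) ^ 4 +
      (-1) * (w ^ q) ^ 2 * (W ^ q) ^ 2 * (x ^ q) ^ 4 * (Y ^ q) ^ 2 * (Z ^ q) ^ 2 +
      (-1) * (w ^ q) ^ 2 * (W ^ q) ^ 2 * (x ^ q) ^ 4 * (y ^ q) ^ 2 * (z ^ q) ^ 4 * (Z ^ q) ^ 2 +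
      (-1) * (w ^ q) ^ 2 * (W ^ q) ^ 2 * (x ^ q) ^ 4 * (y ^ q) ^ 2 * (Y ^ q) ^ 2 * (z ^ q) ^ 4 +
      (-4) * (w ^ q) ^ 2 * (W ^ q) ^ 2 * (x ^ q) ^ 4 * (y ^ q) ^ 4 * (z ^ q) ^ 8 +
      (-1) * (w ^ q) ^ 2 * (W ^ q) ^ 2 * (x ^ q) ^ 6 * (y ^ q) ^ 2 * (z ^ q) ^ 8 +
      (-1) * (w ^ q) ^ 2 * (W ^ q) ^ 2 * (x ^ q) ^ 8 * (y ^ q) ^ 4 * (z ^ q) ^ 4 +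
      1 * (w ^ q) ^ 2 * (W ^ q) ^ 4 * (x ^ q) * (y ^ q) * (z ^ q) ^ 8 +
      (-2) * (w ^ q) ^ 2 * (W ^ q) ^ 4 * (x ^ q) ^ 2 * (y ^ q) ^ 4 * (z ^ q) ^ 4 +
      (-1) * (w ^ q) ^ 3 * (x ^ q) ^ 2 * (X ^ q) * (y ^ q) ^ 4 * (Z ^ q) ^ 4 +
      (-1) * (w ^ q) ^ 3 * (x ^ q) ^ 5 * (y ^ q) ^ 4 * (Z ^ q) ^ 4 +
      (-2) * (w ^ q) ^ 3 * (x ^ q) ^ 5 * (X ^ q) ^ 2 * (y ^ q) ^ 2 * (z ^ q) ^ 8 +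
      (-1) * (w ^ q) ^ 3 * (W ^ q) * (x ^ q) ^ 2 * (y ^ q) ^ 4 * (Z ^ q) ^ 4 +
      (-2) * (w ^ q) ^ 3 * (W ^ q) ^ 2 * (x ^ q) ^ 5 * (y ^ q) ^ 2 * (z ^ q) ^ 8 +
      1 * (w ^ q) ^ 4 * (X ^ q) ^ 2 * (Y ^ q) ^ 2 * (z ^ q) ^ 8 +
      1 * (w ^ q) ^ 4 * (X ^ q) ^ 2 * (y ^ q) ^ 4 * (Y ^ q) ^ 2 * (z ^ q) ^ 4 +
      (-1) * (w ^ q) ^ 4 * (X ^ q) ^ 4 * (y ^ q) ^ 4 * (z ^ q) ^ 4 +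
      1 * (w ^ q) ^ 4 * (x ^ q) ^ 2 * (y ^ q) ^ 2 * (z ^ q) ^ 4 * (Z ^ q) ^ 4 +
      1 * (w ^ q) ^ 4 * (x ^ q) ^ 2 * (y ^ q) ^ 2 * (Y ^ q) ^ 4 * (z ^ q) ^ 4 +
      1 * (w ^ q) ^ 4 * (x ^ q) ^ 2 * (y ^ q) ^ 4 * (Y ^ q) ^ 2 * (z ^ q) ^ 8 +
      1 * (w ^ q) ^ 4 * (x ^ q) ^ 2 * (y ^ q) ^ 8 * (Y ^ q) ^ 2 * (z ^ q) ^ 4 +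
      (-1) * (w ^ q) ^ 4 * (x ^ q) ^ 2 * (y ^ q) ^ 10 * (z ^ q) ^ 8 +
      2 * (w ^ q) ^ 4 * (x ^ q) ^ 2 * (X ^ q) ^ 2 * (y ^ q) ^ 2 * (Y ^ q) ^ 2 * (z ^ q) ^ 4 +
      1 * (w ^ q) ^ 4 * (x ^ q) ^ 2 * (X ^ q) ^ 2 * (y ^ q) ^ 4 * (z ^ q) ^ 8 +
      1 * (w ^ q) ^ 4 * (x ^ q) ^ 2 * (X ^ q) ^ 2 * (y ^ q) ^ 8 * (z ^ q) ^ 4 +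
      1 * (w ^ q) ^ 4 * (x ^ q) ^ 2 * (X ^ q) ^ 4 * (y ^ q) ^ 2 * (z ^ q) ^ 4 +
      (-1) * (w ^ q) ^ 4 * (x ^ q) ^ 4 * (Y ^ q) ^ 2 * (z ^ q) ^ 4 * (Z ^ q) ^ 2 +
      (-1) * (w ^ q) ^ 4 * (x ^ q) ^ 4 * (y ^ q) ^ 2 * (z ^ q) ^ 2 * (Z ^ q) ^ 4 +
      (-1) * (w ^ q) ^ 4 * (x ^ q) ^ 4 * (y ^ q) ^ 2 * (z ^ q) ^ 8 * (Z ^ q) ^ 2 +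
      (-2) * (w ^ q) ^ 4 * (x ^ q) ^ 4 * (y ^ q) ^ 2 * (Y ^ q) ^ 2 * (z ^ q) ^ 2 * (Z ^ q) ^ 2 +
      (-1) * (w ^ q) ^ 4 * (x ^ q) ^ 4 * (y ^ q) ^ 2 * (Y ^ q) ^ 2 * (z ^ q) ^ 8 +
      (-1) * (w ^ q) ^ 4 * (x ^ q) ^ 4 * (y ^ q) ^ 2 * (Y ^ q) ^ 4 * (z ^ q) ^ 2 +
      (-1) * (w ^ q) ^ 4 * (x ^ q) ^ 4 * (y ^ q) ^ 4 * (Z ^ q) ^ 4 +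
      (-2) * (w ^ q) ^ 4 * (x ^ q) ^ 4 * (y ^ q) ^ 4 * (z ^ q) ^ 6 * (Z ^ q) ^ 2 +
      1 * (w ^ q) ^ 4 * (x ^ q) ^ 4 * (y ^ q) ^ 4 * (z ^ q) ^ 12 +
      (-1) * (w ^ q) ^ 4 * (x ^ q) ^ 4 * (y ^ q) ^ 4 * (Y ^ q) ^ 2 * (Z ^ q) ^ 2 +
      (-2) * (w ^ q) ^ 4 * (x ^ q) ^ 4 * (y ^ q) ^ 4 * (Y ^ q) ^ 2 * (z ^ q) ^ 6 +
      (-1) * (w ^ q) ^ 4 * (x ^ q) ^ 4 * (y ^ q) ^ 6 * (z ^ q) ^ 4 * (Z ^ q) ^ 2 +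
      (-1) * (w ^ q) ^ 4 * (x ^ q) ^ 4 * (y ^ q) ^ 6 * (z ^ q) ^ 10 +
      1 * (w ^ q) ^ 4 * (x ^ q) ^ 4 * (y ^ q) ^ 6 * (Y ^ q) ^ 2 * (z ^ q) ^ 4 +
      3 * (w ^ q) ^ 4 * (x ^ q) ^ 4 * (y ^ q) ^ 8 * (z ^ q) ^ 8 +
      1 * (w ^ q) ^ 4 * (x ^ q) ^ 4 * (y ^ q) ^ 12 * (z ^ q) ^ 4 +
      1 * (w ^ q) ^ 4 * (x ^ q) ^ 4 * (X ^ q) ^ 2 * (Y ^ q) ^ 2 * (z ^ q) ^ 4 +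
      (-1) * (w ^ q) ^ 4 * (x ^ q) ^ 4 * (X ^ q) ^ 2 * (y ^ q) ^ 2 * (z ^ q) ^ 8 +
      2 * (w ^ q) ^ 4 * (x ^ q) ^ 4 * (X ^ q) ^ 2 * (y ^ q) ^ 6 * (z ^ q) ^ 4 +
      (-1) * (w ^ q) ^ 4 * (x ^ q) ^ 4 * (X ^ q) ^ 4 * (y ^ q) ^ 2 * (z ^ q) ^ 2 +
      1 * (w ^ q) ^ 4 * (x ^ q) ^ 6 * (y ^ q) ^ 4 * (Y ^ q) ^ 2 * (z ^ q) ^ 4 +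
      1 * (w ^ q) ^ 4 * (x ^ q) ^ 6 * (y ^ q) ^ 10 * (z ^ q) ^ 4 +
      (-1) * (w ^ q) ^ 4 * (x ^ q) ^ 6 * (X ^ q) ^ 2 * (y ^ q) ^ 4 * (z ^ q) ^ 4 +
      (-1) * (w ^ q) ^ 4 * (x ^ q) ^ 8 * (y ^ q) ^ 4 * (z ^ q) ^ 8 +
      (-1) * (w ^ q) ^ 4 * (x ^ q) ^ 8 * (y ^ q) ^ 8 * (z ^ q) ^ 4 +
      (-1) * (w ^ q) ^ 4 * (x ^ q) ^ 12 * (y ^ q) ^ 4 * (z ^ q) ^ 4 +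
      (-1) * (w ^ q) ^ 4 * (W ^ q) ^ 2 * (X ^ q) ^ 2 * (y ^ q) ^ 4 * (z ^ q) ^ 4 +
      (-1) * (w ^ q) ^ 4 * (W ^ q) ^ 2 * (x ^ q) ^ 4 * (y ^ q) ^ 2 * (z ^ q) ^ 8 +
      (-2) * (w ^ q) ^ 4 * (W ^ q) ^ 2 * (x ^ q) ^ 6 * (y ^ q) ^ 4 * (z ^ q) ^ 4 +
      1 * (w ^ q) ^ 4 * (W ^ q) ^ 4 * (x ^ q) ^ 2 * (y ^ q) ^ 2 * (z ^ q) ^ 4 +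
      (-1) * (w ^ q) ^ 4 * (W ^ q) ^ 4 * (x ^ q) ^ 4 * (y ^ q) ^ 2 * (z ^ q) ^ 2 +
      (-1) * (w ^ q) ^ 5 * (x ^ q) * (y ^ q) ^ 10 * (z ^ q) ^ 8 +
      (-1) * (w ^ q) ^ 5 * (x ^ q) ^ 9 * (y ^ q) ^ 2 * (z ^ q) ^ 8 +
      1 * (w ^ q) ^ 6 * (x ^ q) * (y ^ q) ^ 9 * (z ^ q) ^ 8 +
      1 * (w ^ q) ^ 6 * (x ^ q) ^ 2 * (y ^ q) ^ 4 * (z ^ q) ^ 12 +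
      2 * (w ^ q) ^ 6 * (x ^ q) ^ 2 * (y ^ q) ^ 8 * (z ^ q) ^ 8 +
      1 * (w ^ q) ^ 6 * (x ^ q) ^ 2 * (y ^ q) ^ 12 * (z ^ q) ^ 4 +
      1 * (w ^ q) ^ 6 * (x ^ q) ^ 4 * (y ^ q) ^ 6 * (z ^ q) ^ 8 +
      (-1) * (w ^ q) ^ 6 * (x ^ q) ^ 4 * (X ^ q) ^ 2 * (y ^ q) ^ 4 * (z ^ q) ^ 4 +
      1 * (w ^ q) ^ 6 * (x ^ q) ^ 6 * (y ^ q) ^ 4 * (z ^ q) ^ 8 +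
      1 * (w ^ q) ^ 6 * (x ^ q) ^ 9 * (y ^ q) * (z ^ q) ^ 8 +
      (-2) * (w ^ q) ^ 6 * (x ^ q) ^ 10 * (y ^ q) ^ 4 * (z ^ q) ^ 4 +
      (-1) * (w ^ q) ^ 6 * (W ^ q) ^ 2 * (x ^ q) ^ 4 * (y ^ q) ^ 4 * (z ^ q) ^ 4 +
      1 * (w ^ q) ^ 8 * (x ^ q) ^ 2 * (y ^ q) ^ 10 * (z ^ q) ^ 4 +
      1 * (w ^ q) ^ 8 * (x ^ q) ^ 8 * (y ^ q) ^ 4 * (z ^ q) ^ 4 +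
      1 * (w ^ q) ^ 8 * (x ^ q) ^ 10 * (y ^ q) ^ 2 * (z ^ q) ^ 4 +
      (-1) * (w ^ q) ^ 8 * (x ^ q) ^ 12 * (y ^ q) ^ 2 * (z ^ q) ^ 2 +
      (-1) * (w ^ q) ^ 10 * (x ^ q) ^ 2 * (y ^ q) ^ 8 * (z ^ q) ^ 4 +
      1 * (w ^ q) ^ 12 * (x ^ q) ^ 4 * (y ^ q) ^ 4 * (z ^ q) ^ 4 +
      (-1) * (w ^ q) ^ 12 * (x ^ q) ^ 8 * (y ^ q) ^ 2 * (z ^ q) ^ 2)) * h4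

set_option maxHeartbeats 2000000 in
/-- For `j ≥ 5` and `q = 2^(j−3)`, with `E = T_j(w₁, x₁)·T_{j+1}(y₁, z₁)`
and the correction term `c ∈ R₃` as given, the element
`E + d₀(c) − d₁(c) + d₂(c) − d₃(c) + d₄(c)` lies in the ideal of `R₄`
generated by `4` and `v⁴`. -/
theorem key_cocycle_mod_four_v_four (j : ℕ) (hj : 5 ≤ j) (q : ℕ) (hq : q = 2 ^ (j - 3))
    (c : MvPolynomial (Fin 7) ℤ)
    (hc : c = (X 1) ^ (4 * q) * (X 3) ^ (12 * q) * (X 5) ^ (8 * q)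
      + 7 * (X 2) ^ (4 * q) * (X 3) ^ (4 * q) * (X 5) ^ (8 * q)
      + 2 * (X 2) ^ (2 * q) * (X 4) ^ (2 * q) * (X 6) ^ (4 * q)
      + 2 * (X 1) ^ (2 * q) * (X 3) ^ (4 * q) * (X 6) ^ (4 * q)
        * ((X 2) ^ (2 * q) + (X 4) ^ (2 * q))
      + 2 * ((X 1) ^ (4 * q) * (X 3) ^ (4 * q) * (X 5) ^ (4 * q)
          + (X 1) ^ (2 * q) * (X 3) ^ (2 * q) * (X 5) ^ (8 * q))
        * ((X 2) ^ (4 * q) + (X 4) ^ (4 * q) + (X 6) ^ (4 * q))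
      + 2 * (X 1) ^ (6 * q) * (X 3) ^ (10 * q) * (X 5) ^ (8 * q)
      + 2 * (X 1) ^ (8 * q) * (X 3) ^ (12 * q) * (X 5) ^ (4 * q)
      + 2 * (X 1) ^ (12 * q) * (X 3) ^ (8 * q) * (X 5) ^ (4 * q)
      + 2 * (X 1) ^ (2 * q) * (X 4) ^ (2 * q) * (X 5) ^ (16 * q)
      + 2 * (X 1) ^ (4 * q) * (X 4) ^ (4 * q) * (X 5) ^ (8 * q)) :
    (TPoly j (X 1 : MvPolynomial (Fin 9) ℤ) (X 3) * TPoly (j + 1) (X 5) (X 7)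
        + cobarD0 c - cobarD1 c + cobarD2 c - cobarD3 c + cobarD4 c)
      ∈ Ideal.span {(4 : MvPolynomial (Fin 9) ℤ), (X 0) ^ 4} := by
  obtain ⟨n, rfl⟩ : ∃ n, j = n + 5 := ⟨j - 5, by omega⟩
  have hq2 : q = 2 ^ (n + 2) := by rw [hq]; congr 1
  subst hc
  have hd0 : cobarD0 ((X 1) ^ (4 * q) * (X 3) ^ (12 * q) * (X 5) ^ (8 * q)
      + 7 * (X 2) ^ (4 * q) * (X 3) ^ (4 * q) * (X 5) ^ (8 * q)
      + 2 * (X 2) ^ (2 * q) * (X 4) ^ (2 * q) * (X 6) ^ (4 * q)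
      + 2 * (X 1) ^ (2 * q) * (X 3) ^ (4 * q) * (X 6) ^ (4 * q)
        * ((X 2) ^ (2 * q) + (X 4) ^ (2 * q))
      + 2 * ((X 1) ^ (4 * q) * (X 3) ^ (4 * q) * (X 5) ^ (4 * q)
          + (X 1) ^ (2 * q) * (X 3) ^ (2 * q) * (X 5) ^ (8 * q))
        * ((X 2) ^ (4 * q) + (X 4) ^ (4 * q) + (X 6) ^ (4 * q))
      + 2 * (X 1) ^ (6 * q) * (X 3) ^ (10 * q) * (X 5) ^ (8 * q)
      + 2 * (X 1) ^ (8 * q) * (X 3) ^ (12 * q) * (X 5) ^ (4 * q)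
      + 2 * (X 1) ^ (12 * q) * (X 3) ^ (8 * q) * (X 5) ^ (4 * q)
      + 2 * (X 1) ^ (2 * q) * (X 4) ^ (2 * q) * (X 5) ^ (16 * q)
      + 2 * (X 1) ^ (4 * q) * (X 4) ^ (4 * q) * (X 5) ^ (8 * q))
      = cExpr q (X 3) (X 4) (X 5) (X 6) (X 7) (X 8) := by
    have v0 : (![X 0, X 3, X 4, X 5, X 6, X 7, X 8] : Fin 7 → MvPolynomial (Fin 9) ℤ) 0 = X 0 := rfl
    have v1 : (![X 0, X 3, X 4, X 5, X 6, X 7, X 8] : Fin 7 → MvPolynomial (Fin 9) ℤ) 1 = X 3 := rfl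
    have v2 : (![X 0, X 3, X 4, X 5, X 6, X 7, X 8] : Fin 7 → MvPolynomial (Fin 9) ℤ) 2 = X 4 := rfl
    have v3 : (![X 0, X 3, X 4, X 5, X 6, X 7, X 8] : Fin 7 → MvPolynomial (Fin 9) ℤ) 3 = X 5 := rfl
    have v4 : (![X 0, X 3, X 4, X 5, X 6, X 7, X 8] : Fin 7 → MvPolynomial (Fin 9) ℤ) 4 = X 6 := rfl
    have v5 : (![X 0, X 3, X 4, X 5, X 6, X 7, X 8] : Fin 7 → MvPolynomial (Fin 9) ℤ) 5 = X 7 := rfl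
    have v6 : (![X 0, X 3, X 4, X 5, X 6, X 7, X 8] : Fin 7 → MvPolynomial (Fin 9) ℤ) 6 = X 8 := rfl
    simp only [cobarD0, cExpr, map_add, map_sub, map_mul, map_pow, map_ofNat, aeval_X,
      v0, v1, v2, v3, v4, v5, v6]
  have hd1 : cobarD1 ((X 1) ^ (4 * q) * (X 3) ^ (12 * q) * (X 5) ^ (8 * q)
      + 7 * (X 2) ^ (4 * q) * (X 3) ^ (4 * q) * (X 5) ^ (8 * q)
      + 2 * (X 2) ^ (2 * q) * (X 4) ^ (2 * q) * (X 6) ^ (4 * q)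
      + 2 * (X 1) ^ (2 * q) * (X 3) ^ (4 * q) * (X 6) ^ (4 * q)
        * ((X 2) ^ (2 * q) + (X 4) ^ (2 * q))
      + 2 * ((X 1) ^ (4 * q) * (X 3) ^ (4 * q) * (X 5) ^ (4 * q)
          + (X 1) ^ (2 * q) * (X 3) ^ (2 * q) * (X 5) ^ (8 * q))
        * ((X 2) ^ (4 * q) + (X 4) ^ (4 * q) + (X 6) ^ (4 * q))
      + 2 * (X 1) ^ (6 * q) * (X 3) ^ (10 * q) * (X 5) ^ (8 * q)
      + 2 * (X 1) ^ (8 * q) * (X 3) ^ (12 * q) * (X 5) ^ (4 * q)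
      + 2 * (X 1) ^ (12 * q) * (X 3) ^ (8 * q) * (X 5) ^ (4 * q)
      + 2 * (X 1) ^ (2 * q) * (X 4) ^ (2 * q) * (X 5) ^ (16 * q)
      + 2 * (X 1) ^ (4 * q) * (X 4) ^ (4 * q) * (X 5) ^ (8 * q))
      = cExpr q (X 1 + X 3) (X 2 - X 1 * (X 3) ^ 2 + X 0 * X 1 * X 3 + X 4) (X 5) (X 6) (X 7) (X 8) := by
    have v0 : (![X 0, X 1 + X 3, X 2 - X 1 * (X 3) ^ 2 + X 0 * X 1 * X 3 + X 4, X 5, X 6, X 7, X 8] : Fin 7 → MvPolynomial (Fin 9) ℤ) 0 = X 0 := rfl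
    have v1 : (![X 0, X 1 + X 3, X 2 - X 1 * (X 3) ^ 2 + X 0 * X 1 * X 3 + X 4, X 5, X 6, X 7, X 8] : Fin 7 → MvPolynomial (Fin 9) ℤ) 1 = X 1 + X 3 := rfl
    have v2 : (![X 0, X 1 + X 3, X 2 - X 1 * (X 3) ^ 2 + X 0 * X 1 * X 3 + X 4, X 5, X 6, X 7, X 8] : Fin 7 → MvPolynomial (Fin 9) ℤ) 2 = X 2 - X 1 * (X 3) ^ 2 + X 0 * X 1 * X 3 + X 4 := rfl
    have v3 : (![X 0, X 1 + X 3, X 2 - X 1 * (X 3) ^ 2 + X 0 * X 1 * X 3 + X 4, X 5, X 6, X 7, X 8] : Fin 7 → MvPolynomial (Fin 9) ℤ) 3 = X 5 := rfl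
    have v4 : (![X 0, X 1 + X 3, X 2 - X 1 * (X 3) ^ 2 + X 0 * X 1 * X 3 + X 4, X 5, X 6, X 7, X 8] : Fin 7 → MvPolynomial (Fin 9) ℤ) 4 = X 6 := rfl
    have v5 : (![X 0, X 1 + X 3, X 2 - X 1 * (X 3) ^ 2 + X 0 * X 1 * X 3 + X 4, X 5, X 6, X 7, X 8] : Fin 7 → MvPolynomial (Fin 9) ℤ) 5 = X 7 := rfl
    have v6 : (![X 0, X 1 + X 3, X 2 - X 1 * (X 3) ^ 2 + X 0 * X 1 * X 3 + X 4, X 5, X 6, X 7, X 8] : Fin 7 → MvPolynomial (Fin 9) ℤ) 6 = X 8 := rfl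
    simp only [cobarD1, cExpr, map_add, map_sub, map_mul, map_pow, map_ofNat, aeval_X,
      v0, v1, v2, v3, v4, v5, v6]
  have hd2 : cobarD2 ((X 1) ^ (4 * q) * (X 3) ^ (12 * q) * (X 5) ^ (8 * q)
      + 7 * (X 2) ^ (4 * q) * (X 3) ^ (4 * q) * (X 5) ^ (8 * q)
      + 2 * (X 2) ^ (2 * q) * (X 4) ^ (2 * q) * (X 6) ^ (4 * q)
      + 2 * (X 1) ^ (2 * q) * (X 3) ^ (4 * q) * (X 6) ^ (4 * q)
        * ((X 2) ^ (2 * q) + (X 4) ^ (2 * q))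
      + 2 * ((X 1) ^ (4 * q) * (X 3) ^ (4 * q) * (X 5) ^ (4 * q)
          + (X 1) ^ (2 * q) * (X 3) ^ (2 * q) * (X 5) ^ (8 * q))
        * ((X 2) ^ (4 * q) + (X 4) ^ (4 * q) + (X 6) ^ (4 * q))
      + 2 * (X 1) ^ (6 * q) * (X 3) ^ (10 * q) * (X 5) ^ (8 * q)
      + 2 * (X 1) ^ (8 * q) * (X 3) ^ (12 * q) * (X 5) ^ (4 * q)
      + 2 * (X 1) ^ (12 * q) * (X 3) ^ (8 * q) * (X 5) ^ (4 * q)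
      + 2 * (X 1) ^ (2 * q) * (X 4) ^ (2 * q) * (X 5) ^ (16 * q)
      + 2 * (X 1) ^ (4 * q) * (X 4) ^ (4 * q) * (X 5) ^ (8 * q))
      = cExpr q (X 1) (X 2) (X 3 + X 5) (X 4 - X 3 * (X 5) ^ 2 + X 0 * X 3 * X 5 + X 6) (X 7) (X 8) := by
    have v0 : (![X 0, X 1, X 2, X 3 + X 5, X 4 - X 3 * (X 5) ^ 2 + X 0 * X 3 * X 5 + X 6, X 7, X 8] : Fin 7 → MvPolynomial (Fin 9) ℤ) 0 = X 0 := rfl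
    have v1 : (![X 0, X 1, X 2, X 3 + X 5, X 4 - X 3 * (X 5) ^ 2 + X 0 * X 3 * X 5 + X 6, X 7, X 8] : Fin 7 → MvPolynomial (Fin 9) ℤ) 1 = X 1 := rfl
    have v2 : (![X 0, X 1, X 2, X 3 + X 5, X 4 - X 3 * (X 5) ^ 2 + X 0 * X 3 * X 5 + X 6, X 7, X 8] : Fin 7 → MvPolynomial (Fin 9) ℤ) 2 = X 2 := rfl
    have v3 : (![X 0, X 1, X 2, X 3 + X 5, X 4 - X 3 * (X 5) ^ 2 + X 0 * X 3 * X 5 + X 6, X 7, X 8] : Fin 7 → MvPolynomial (Fin 9) ℤ) 3 = X 3 + X 5 := rfl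
    have v4 : (![X 0, X 1, X 2, X 3 + X 5, X 4 - X 3 * (X 5) ^ 2 + X 0 * X 3 * X 5 + X 6, X 7, X 8] : Fin 7 → MvPolynomial (Fin 9) ℤ) 4 = X 4 - X 3 * (X 5) ^ 2 + X 0 * X 3 * X 5 + X 6 := rfl
    have v5 : (![X 0, X 1, X 2, X 3 + X 5, X 4 - X 3 * (X 5) ^ 2 + X 0 * X 3 * X 5 + X 6, X 7, X 8] : Fin 7 → MvPolynomial (Fin 9) ℤ) 5 = X 7 := rfl
    have v6 : (![X 0, X 1, X 2, X 3 + X 5, X 4 - X 3 * (X 5) ^ 2 + X 0 * X 3 * X 5 + X 6, X 7, X 8] : Fin 7 → MvPolynomial (Fin 9) ℤ) 6 = X 8 := rfl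
    simp only [cobarD2, cExpr, map_add, map_sub, map_mul, map_pow, map_ofNat, aeval_X,
      v0, v1, v2, v3, v4, v5, v6]
  have hd3 : cobarD3 ((X 1) ^ (4 * q) * (X 3) ^ (12 * q) * (X 5) ^ (8 * q)
      + 7 * (X 2) ^ (4 * q) * (X 3) ^ (4 * q) * (X 5) ^ (8 * q)
      + 2 * (X 2) ^ (2 * q) * (X 4) ^ (2 * q) * (X 6) ^ (4 * q)
      + 2 * (X 1) ^ (2 * q) * (X 3) ^ (4 * q) * (X 6) ^ (4 * q)
        * ((X 2) ^ (2 * q) + (X 4) ^ (2 * q))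
      + 2 * ((X 1) ^ (4 * q) * (X 3) ^ (4 * q) * (X 5) ^ (4 * q)
          + (X 1) ^ (2 * q) * (X 3) ^ (2 * q) * (X 5) ^ (8 * q))
        * ((X 2) ^ (4 * q) + (X 4) ^ (4 * q) + (X 6) ^ (4 * q))
      + 2 * (X 1) ^ (6 * q) * (X 3) ^ (10 * q) * (X 5) ^ (8 * q)
      + 2 * (X 1) ^ (8 * q) * (X 3) ^ (12 * q) * (X 5) ^ (4 * q)
      + 2 * (X 1) ^ (12 * q) * (X 3) ^ (8 * q) * (X 5) ^ (4 * q)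
      + 2 * (X 1) ^ (2 * q) * (X 4) ^ (2 * q) * (X 5) ^ (16 * q)
      + 2 * (X 1) ^ (4 * q) * (X 4) ^ (4 * q) * (X 5) ^ (8 * q))
      = cExpr q (X 1) (X 2) (X 3) (X 4) (X 5 + X 7) (X 6 - X 5 * (X 7) ^ 2 + X 0 * X 5 * X 7 + X 8) := by
    have v0 : (![X 0, X 1, X 2, X 3, X 4, X 5 + X 7, X 6 - X 5 * (X 7) ^ 2 + X 0 * X 5 * X 7 + X 8] : Fin 7 → MvPolynomial (Fin 9) ℤ) 0 = X 0 := rfl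
    have v1 : (![X 0, X 1, X 2, X 3, X 4, X 5 + X 7, X 6 - X 5 * (X 7) ^ 2 + X 0 * X 5 * X 7 + X 8] : Fin 7 → MvPolynomial (Fin 9) ℤ) 1 = X 1 := rfl
    have v2 : (![X 0, X 1, X 2, X 3, X 4, X 5 + X 7, X 6 - X 5 * (X 7) ^ 2 + X 0 * X 5 * X 7 + X 8] : Fin 7 → MvPolynomial (Fin 9) ℤ) 2 = X 2 := rfl
    have v3 : (![X 0, X 1, X 2, X 3, X 4, X 5 + X 7, X 6 - X 5 * (X 7) ^ 2 + X 0 * X 5 * X 7 + X 8] : Fin 7 → MvPolynomial (Fin 9) ℤ) 3 = X 3 := rfl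
    have v4 : (![X 0, X 1, X 2, X 3, X 4, X 5 + X 7, X 6 - X 5 * (X 7) ^ 2 + X 0 * X 5 * X 7 + X 8] : Fin 7 → MvPolynomial (Fin 9) ℤ) 4 = X 4 := rfl
    have v5 : (![X 0, X 1, X 2, X 3, X 4, X 5 + X 7, X 6 - X 5 * (X 7) ^ 2 + X 0 * X 5 * X 7 + X 8] : Fin 7 → MvPolynomial (Fin 9) ℤ) 5 = X 5 + X 7 := rfl
    have v6 : (![X 0, X 1, X 2, X 3, X 4, X 5 + X 7, X 6 - X 5 * (X 7) ^ 2 + X 0 * X 5 * X 7 + X 8] : Fin 7 → MvPolynomial (Fin 9) ℤ) 6 = X 6 - X 5 * (X 7) ^ 2 + X 0 * X 5 * X 7 + X 8 := rfl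
    simp only [cobarD3, cExpr, map_add, map_sub, map_mul, map_pow, map_ofNat, aeval_X,
      v0, v1, v2, v3, v4, v5, v6]
  have hd4 : cobarD4 ((X 1) ^ (4 * q) * (X 3) ^ (12 * q) * (X 5) ^ (8 * q)
      + 7 * (X 2) ^ (4 * q) * (X 3) ^ (4 * q) * (X 5) ^ (8 * q)
      + 2 * (X 2) ^ (2 * q) * (X 4) ^ (2 * q) * (X 6) ^ (4 * q)
      + 2 * (X 1) ^ (2 * q) * (X 3) ^ (4 * q) * (X 6) ^ (4 * q)
        * ((X 2) ^ (2 * q) + (X 4) ^ (2 * q))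
      + 2 * ((X 1) ^ (4 * q) * (X 3) ^ (4 * q) * (X 5) ^ (4 * q)
          + (X 1) ^ (2 * q) * (X 3) ^ (2 * q) * (X 5) ^ (8 * q))
        * ((X 2) ^ (4 * q) + (X 4) ^ (4 * q) + (X 6) ^ (4 * q))
      + 2 * (X 1) ^ (6 * q) * (X 3) ^ (10 * q) * (X 5) ^ (8 * q)
      + 2 * (X 1) ^ (8 * q) * (X 3) ^ (12 * q) * (X 5) ^ (4 * q)
      + 2 * (X 1) ^ (12 * q) * (X 3) ^ (8 * q) * (X 5) ^ (4 * q)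
      + 2 * (X 1) ^ (2 * q) * (X 4) ^ (2 * q) * (X 5) ^ (16 * q)
      + 2 * (X 1) ^ (4 * q) * (X 4) ^ (4 * q) * (X 5) ^ (8 * q))
      = cExpr q (X 1) (X 2) (X 3) (X 4) (X 5) (X 6) := by
    have v0 : (![X 0, X 1, X 2, X 3, X 4, X 5, X 6] : Fin 7 → MvPolynomial (Fin 9) ℤ) 0 = X 0 := rfl
    have v1 : (![X 0, X 1, X 2, X 3, X 4, X 5, X 6] : Fin 7 → MvPolynomial (Fin 9) ℤ) 1 = X 1 := rfl
    have v2 : (![X 0, X 1, X 2, X 3, X 4, X 5, X 6] : Fin 7 → MvPolynomial (Fin 9) ℤ) 2 = X 2 := rfl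
    have v3 : (![X 0, X 1, X 2, X 3, X 4, X 5, X 6] : Fin 7 → MvPolynomial (Fin 9) ℤ) 3 = X 3 := rfl
    have v4 : (![X 0, X 1, X 2, X 3, X 4, X 5, X 6] : Fin 7 → MvPolynomial (Fin 9) ℤ) 4 = X 4 := rfl
    have v5 : (![X 0, X 1, X 2, X 3, X 4, X 5, X 6] : Fin 7 → MvPolynomial (Fin 9) ℤ) 5 = X 5 := rfl
    have v6 : (![X 0, X 1, X 2, X 3, X 4, X 5, X 6] : Fin 7 → MvPolynomial (Fin 9) ℤ) 6 = X 6 := rfl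
    simp only [cobarD4, cExpr, map_add, map_sub, map_mul, map_pow, map_ofNat, aeval_X,
      v0, v1, v2, v3, v4, v5, v6]
  rw [← Ideal.Quotient.eq_zero_iff_mem, hd0, hd1, hd2, hd3, hd4]
  have h4Q : (4 : MvPolynomial (Fin 9) ℤ ⧸ Ideal.span {(4 : MvPolynomial (Fin 9) ℤ), (X 0) ^ 4}) = 0 := by
    rw [show (4 : MvPolynomial (Fin 9) ℤ ⧸ Ideal.span {(4 : MvPolynomial (Fin 9) ℤ), (X 0) ^ 4})
        = Ideal.Quotient.mk _ (4 : MvPolynomial (Fin 9) ℤ) from (map_ofNat _ 4).symm,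
      Ideal.Quotient.eq_zero_iff_mem]
    exact Ideal.subset_span (Set.mem_insert _ _)
  have hvQ : (Ideal.Quotient.mk (Ideal.span {(4 : MvPolynomial (Fin 9) ℤ), (X 0) ^ 4}) (X 0)) ^ 4 = 0 := by
    rw [← map_pow, Ideal.Quotient.eq_zero_iff_mem]
    exact Ideal.subset_span (Set.mem_insert_of_mem _ rfl)
  have key := master h4Q n q hq2
    (Ideal.Quotient.mk _ (X 0)) (Ideal.Quotient.mk _ (X 1)) (Ideal.Quotient.mk _ (X 2))
    (Ideal.Quotient.mk _ (X 3)) (Ideal.Quotient.mk _ (X 4)) (Ideal.Quotient.mk _ (X 5))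
    (Ideal.Quotient.mk _ (X 6)) (Ideal.Quotient.mk _ (X 7)) (Ideal.Quotient.mk _ (X 8)) hvQ
  simp only [map_add, map_sub, map_mul, map_pow, map_TPoly, map_cExpr] at key ⊢
  convert key using 2
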